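/- arXiv:2210.06511 — 4 statements merged into one kernel-verified Lean document; each statement's English description precedes it below -/
import Mathlib

section
/- Change of measure (sub-Gaussian form): Let X and Y be random variables over spaces 𝒳 and 𝒴, and let Y′ be a random variable with the same marginal distribution as Y such that Y′ is independent of X. Assume the joint distribution of (X,Y) is absolutely continuous with respect to the joint distribution of (X,Y′). Let f: 𝒳×𝒴 → [−1,1] be measurable with E_{X,Y′}[f(X,Y′)] = 0. Then |E_{X,Y}[f(X,Y)]| ≤ sqrt(2·I(X;Y)), where I(X;Y) denotes the mutual information between X and Y. -/
open MeasureTheory ProbabilityTheory Real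
open scoped ENNReal ProbabilityTheory

open Classical in
/-- Kullback-Leibler divergence between two measures, valued in `ℝ≥0∞`
(infinite when absolute continuity or integrability of the log-likelihood ratio fails). -/
noncomputable def klDiv {α : Type*} [MeasurableSpace α] (μ ν : Measure α) : ℝ≥0∞ :=
  if μ ≪ ν ∧ Integrable (llr μ ν) μ then ENNReal.ofReal (∫ x, llr μ ν x ∂μ) else ⊤

/-- Mutual information `I(X;Y) = D(P_{XY} ‖ P_X ⊗ P_Y)`. -/
noncomputable def mutualInfo {Ω α β : Type*} [MeasurableSpace Ω] [MeasurableSpace α]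
    [MeasurableSpace β] (μ : Measure Ω) (X : Ω → α) (Y : Ω → β) : ℝ≥0∞ :=
  klDiv (μ.map fun ω => (X ω, Y ω)) ((μ.map X).prod (μ.map Y))

/-!
For every `t`, the Donsker–Varadhan variational formula applied to `t • F` bounds
`t E_P[F]` by `D(P ‖ Q) + log E_Q[exp (t F)]`, and Hoeffding's lemma bounds the last term by
`t² / 2` when `F` takes values in `[-1, 1]` and is centred under `Q`. A quadratic in `t` that is
nonnegative everywhere has nonpositive discriminant, which gives `E_P[F]² ≤ 2 D(P ‖ Q)`.
With `P` the joint law of `(X, Y)` and `Q` the joint law of `(X, Y')`, which is `P_X ⊗ P_Y`,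
this is the theorem.
-/

open scoped NNReal

section KullbackLeibler

variable {α : Type*} [MeasurableSpace α] {P Q : Measure α}
  [IsProbabilityMeasure P] [IsProbabilityMeasure Q]

lemma integral_llr_nonneg (hPQ : P ≪ Q) (h_int : Integrable (llr P Q) P) :
    0 ≤ ∫ x, llr P Q x ∂P := by
  simpa using InformationTheory.integral_llr_add_sub_measure_univ_nonneg hPQ h_int

/-- The Donsker–Varadhan lower bound: Gibbs' inequality for `P` against the tilted measure
`Q.tilted g`. -/
lemma integral_sub_log_integral_exp_le_integral_llr (hPQ : P ≪ Q)
    (h_int : Integrable (llr P Q) P) {g : α → ℝ} (hgP : Integrable g P)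
    (hgQ : Integrable (fun x ↦ exp (g x)) Q) :
    ∫ x, g x ∂P - log (∫ x, exp (g x) ∂Q) ≤ ∫ x, llr P Q x ∂P := by
  have : IsProbabilityMeasure (Q.tilted g) := isProbabilityMeasure_tilted hgQ
  have h_tilted := integral_llr_nonneg (hPQ.trans (absolutelyContinuous_tilted hgQ))
    (integrable_llr_tilted_right hPQ hgP h_int hgQ)
  rw [integral_llr_tilted_right hPQ hgP hgQ h_int] at h_tilted
  linarith

lemma ProbabilityTheory.HasSubgaussianMGF.sq_integral_le_two_mul_integral_llr
    {F : α → ℝ} {c : ℝ≥0} (hF : HasSubgaussianMGF F c Q) (hFP : Integrable F P)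
    (hPQ : P ≪ Q) (h_int : Integrable (llr P Q) P) :
    (∫ x, F x ∂P) ^ 2 ≤ 2 * c * ∫ x, llr P Q x ∂P := by
  have h_quadratic : ∀ t : ℝ,
      0 ≤ (c / 2 : ℝ) * (t * t) + (-∫ x, F x ∂P) * t + ∫ x, llr P Q x ∂P := by
    intro t
    have h_dv := integral_sub_log_integral_exp_le_integral_llr hPQ h_int (hFP.const_mul t)
      (hF.integrable_exp_mul t)
    have h_cgf : cgf F Q t ≤ c * t ^ 2 / 2 := hF.cgf_le t
    rw [integral_const_mul] at h_dv
    rw [cgf, mgf] at h_cgf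
    nlinarith
  have := discrim_le_zero h_quadratic
  rw [discrim] at this
  linarith

lemma ofReal_abs_integral_le_rpow_klDiv {F : α → ℝ} (hF : Measurable F)
    (hF_mem : ∀ x, F x ∈ Set.Icc (-1 : ℝ) 1) (hF_mean : ∫ x, F x ∂Q = 0) :
    ENNReal.ofReal |∫ x, F x ∂P| ≤ (2 * klDiv P Q) ^ (1 / 2 : ℝ) := by
  by_cases h : P ≪ Q ∧ Integrable (llr P Q) P
  swap
  · simp [klDiv, h]
  obtain ⟨hPQ, h_int⟩ := h
  have h_subgaussian : HasSubgaussianMGF F 1 Q := by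
    convert hasSubgaussianMGF_of_mem_Icc_of_integral_eq_zero hF.aemeasurable
      (ae_of_all _ hF_mem) hF_mean
    norm_num
  have h_sq := h_subgaussian.sq_integral_le_two_mul_integral_llr
    (.of_mem_Icc (-1) 1 hF.aemeasurable (ae_of_all _ hF_mem)) hPQ h_int
  have h_nonneg := integral_llr_nonneg hPQ h_int
  rw [klDiv, if_pos ⟨hPQ, h_int⟩, ← ENNReal.ofReal_ofNat 2, ← ENNReal.ofReal_mul zero_le_two,
    ENNReal.ofReal_rpow_of_nonneg (by positivity) (by norm_num), ← sqrt_eq_rpow]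
  gcongr
  exact abs_le_sqrt (by simpa using h_sq)

end KullbackLeibler

theorem change_of_measure_subgaussian_general
    {Ω 𝒳 𝒴 : Type*} [MeasurableSpace Ω] [MeasurableSpace 𝒳] [MeasurableSpace 𝒴]
    (μ : Measure Ω) [IsProbabilityMeasure μ]
    (X : Ω → 𝒳) (Y Y' : Ω → 𝒴)
    (hX : Measurable X) (hY : Measurable Y) (hY' : Measurable Y')
    (hlaw : μ.map Y' = μ.map Y)
    (hindep : IndepFun X Y' μ)
    (f : 𝒳 → 𝒴 → ℝ) (hf : Measurable (Function.uncurry f))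
    (hbound : ∀ x y, f x y ∈ Set.Icc (-1 : ℝ) 1)
    (hzero : ∫ ω, f (X ω) (Y' ω) ∂μ = 0) :
    ENNReal.ofReal |∫ ω, f (X ω) (Y ω) ∂μ| ≤ (2 * mutualInfo μ X Y) ^ (1/2 : ℝ) := by
  have : IsProbabilityMeasure (μ.map fun ω ↦ (X ω, Y ω)) :=
    Measure.isProbabilityMeasure_map (hX.prodMk hY).aemeasurable
  have : IsProbabilityMeasure (μ.map fun ω ↦ (X ω, Y' ω)) :=
    Measure.isProbabilityMeasure_map (hX.prodMk hY').aemeasurable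
  have h_mean : ∫ p, Function.uncurry f p ∂(μ.map fun ω ↦ (X ω, Y' ω)) = 0 := by
    rwa [integral_map (hX.prodMk hY').aemeasurable hf.aestronglyMeasurable]
  have h_bound : ∀ p, Function.uncurry f p ∈ Set.Icc (-1 : ℝ) 1 := fun p ↦ hbound p.1 p.2
  have h_joint := ofReal_abs_integral_le_rpow_klDiv hf h_bound h_mean
    (P := μ.map fun ω ↦ (X ω, Y ω))
  rwa [integral_map (hX.prodMk hY).aemeasurable hf.aestronglyMeasurable,
    (indepFun_iff_map_prod_eq_prod_map_map hX.aemeasurable hY'.aemeasurable).mp hindep,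
    hlaw] at h_joint

/-- **Change of measure, sub-Gaussian form.**
If `Y'` has the same marginal as `Y`, is independent of `X`, the joint law of `(X,Y)` is
absolutely continuous w.r.t. that of `(X,Y')`, and `f : 𝒳 × 𝒴 → [-1,1]` is measurable with
`E[f(X,Y')] = 0`, then `|E[f(X,Y)]| ≤ sqrt (2 * I(X;Y))`. -/
theorem change_of_measure_subgaussian
    {Ω 𝒳 𝒴 : Type*} [MeasurableSpace Ω] [MeasurableSpace 𝒳] [MeasurableSpace 𝒴]
    (μ : Measure Ω) [IsProbabilityMeasure μ]
    (X : Ω → 𝒳) (Y Y' : Ω → 𝒴)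
    (hX : Measurable X) (hY : Measurable Y) (hY' : Measurable Y')
    (hlaw : μ.map Y' = μ.map Y)
    (hindep : IndepFun X Y' μ)
    (hac : (μ.map fun ω => (X ω, Y ω)) ≪ (μ.map fun ω => (X ω, Y' ω)))
    (f : 𝒳 → 𝒴 → ℝ) (hf : Measurable (Function.uncurry f))
    (hbound : ∀ x y, f x y ∈ Set.Icc (-1 : ℝ) 1)
    (hzero : ∫ ω, f (X ω) (Y' ω) ∂μ = 0) :
    ENNReal.ofReal |∫ ω, f (X ω) (Y ω) ∂μ| ≤ (2 * mutualInfo μ X Y) ^ (1/2 : ℝ) :=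
  change_of_measure_subgaussian_general μ X Y Y' hX hY hY' hlaw hindep f hf hbound hzero
end

section
/- Change of measure (binary KL form): Let X and Y be random variables over spaces 𝒳 and 𝒴, and let Y′ be a random variable with the same marginal distribution as Y such that Y′ is independent of X. Assume the joint distribution of (X,Y) is absolutely continuous with respect to the joint distribution of (X,Y′). Let g: 𝒳×𝒴 → [0,1] be measurable. Then d( E_{X,Y}[g(X,Y)] ‖ E_{X,Y′}[g(X,Y′)] ) ≤ I(X;Y), where d(p‖q) denotes the binary KL divergence. -/
/-!
Composing with the Markov kernel that sends `z` to a coin of bias `g z` maps the joint law of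
`(X, Y)` and the law `P_X ⊗ P_Y` of `(X, Y')` to Bernoulli laws of biases `E[g(X,Y)]` and
`E[g(X,Y')]`, whose divergence is the binary divergence `d(·‖·)`. The data processing inequality
for the KL divergence then bounds it by `D(P_{XY} ‖ P_X ⊗ P_Y) = I(X;Y)`.
-/

open MeasureTheory ProbabilityTheory Real
open scoped ENNReal ProbabilityTheory

open Classical in
/-- Binary KL divergence `d(p‖q) = p log(p/q) + (1-p) log((1-p)/(1-q))`, valued in `ℝ≥0∞`,
with the conventions `0 log 0 = 0` and `d(p‖q) = ∞` when `q ∈ {0,1}` but `p` is not. -/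
noncomputable def binKL (p q : ℝ) : ℝ≥0∞ :=
  if (q = 0 ∧ p ≠ 0) ∨ (q = 1 ∧ p ≠ 1) then ⊤
  else ENNReal.ofReal (p * Real.log (p / q) + (1 - p) * Real.log ((1 - p) / (1 - q)))

open unitInterval

section
variable {α : Type*} [MeasurableSpace α] {μ ν : Measure α}

-- Mathlib's divergence carries the correction term `ν.real univ - μ.real univ`.
lemma klDiv_eq_informationTheory_klDiv (h : μ Set.univ = ν Set.univ) :
    klDiv μ ν = InformationTheory.klDiv μ ν := by
  by_cases hac : μ ≪ ν
  · by_cases hint : Integrable (llr μ ν) μ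
    · simp [klDiv, hac, hint, InformationTheory.klDiv_of_ac_of_integrable, measureReal_def, h]
    · simp [klDiv, hint, InformationTheory.klDiv_of_not_integrable]
  · simp [klDiv, hac, InformationTheory.klDiv_of_not_ac]

lemma MeasureTheory.Measure.absolutelyContinuous_of_measure_singleton [Countable α]
    [MeasurableSingletonClass α] (h : ∀ x, ν {x} = 0 → μ {x} = 0) : μ ≪ ν := by
  refine Measure.AbsolutelyContinuous.mk fun s _ hs => ?_
  rw [← Set.biUnion_of_singleton s] at hs ⊢
  rw [measure_biUnion_null_iff s.to_countable] at hs ⊢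
  exact fun x hx => h x (hs x hx)

variable [MeasurableSingletonClass α]

lemma MeasureTheory.Measure.rnDeriv_eq_div_of_measure_singleton_ne_zero
    [μ.HaveLebesgueDecomposition ν] [SFinite ν] (h : μ ≪ ν) {x : α} (hx : ν {x} ≠ 0)
    (hx' : ν {x} ≠ ∞) :
    μ.rnDeriv ν x = μ {x} / ν {x} := by
  rw [ENNReal.eq_div_iff hx hx', mul_comm, ← lintegral_singleton, Measure.setLIntegral_rnDeriv h]

lemma measureReal_singleton_mul_llr [SigmaFinite μ] [IsFiniteMeasure ν] (h : μ ≪ ν) (x : α) :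
    μ.real {x} * llr μ ν x = μ.real {x} * log (μ.real {x} / ν.real {x}) := by
  by_cases hx : ν {x} = 0
  · simp [measureReal_def, h hx]
  · rw [llr, Measure.rnDeriv_eq_div_of_measure_singleton_ne_zero h hx (measure_ne_top ν _),
      ENNReal.toReal_div, measureReal_def, measureReal_def]

lemma klDiv_eq_sum [Fintype α] [IsFiniteMeasure μ] [IsFiniteMeasure ν] (h : μ ≪ ν) :
    klDiv μ ν = ENNReal.ofReal (∑ x, μ.real {x} * log (μ.real {x} / ν.real {x})) := by
  rw [klDiv, if_pos ⟨h, Integrable.of_finite⟩, integral_fintype Integrable.of_finite]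
  simp only [smul_eq_mul, measureReal_singleton_mul_llr h]

end

lemma measureReal_singleton_false (μ : Measure Bool) [IsProbabilityMeasure μ] :
    μ.real {false} = 1 - μ.real {true} := by
  rw [← probReal_compl_eq_one_sub (measurableSet_singleton true)]
  congr
  ext b
  simp

lemma klDiv_eq_binKL (μ ν : Measure Bool) [IsProbabilityMeasure μ] [IsProbabilityMeasure ν] :
    klDiv μ ν = binKL (μ.real {true}) (ν.real {true}) := by
  have h_ac : μ ≪ ν ↔ ∀ b, ν.real {b} = 0 → μ.real {b} = 0 := by
    simp only [measureReal_eq_zero_iff (measure_ne_top _ _)]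
    exact ⟨fun h b hb => h hb, Measure.absolutelyContinuous_of_measure_singleton⟩
  rw [binKL]
  split_ifs with hdeg
  · refine if_neg fun h => ?_
    rcases hdeg with ⟨hq, hp⟩ | ⟨hq, hp⟩
    · exact hp (h_ac.1 h.1 true hq)
    · have := h_ac.1 h.1 false
      simp only [measureReal_singleton_false, hq] at this
      exact hp (by linarith [this (by ring)])
  · have hac : μ ≪ ν := h_ac.2 fun b => by
      push Not at hdeg
      cases b
      · simp only [measureReal_singleton_false, sub_eq_zero]
        exact fun h => (hdeg.2 h.symm).symm
      · exact hdeg.1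
    rw [klDiv_eq_sum hac, Fintype.sum_bool, measureReal_singleton_false,
      measureReal_singleton_false, add_comm]

section
variable {α : Type*} [MeasurableSpace α] {g : α → I}

noncomputable def bernoulliKernel (g : α → I) (hg : Measurable g) : Kernel α Bool where
  toFun x := Ber(true, false, g x)
  measurable' := by
    classical
    refine Measure.measurable_of_measurable_coe _ fun s hs => ?_
    simp only [bernoulliMeasure_apply _ hs]
    split_ifs <;> fun_prop

instance (hg : Measurable g) : IsMarkovKernel (bernoulliKernel g hg) :=
  ⟨fun x => by simp only [bernoulliKernel, Kernel.coe_mk]; infer_instance⟩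

lemma measureReal_bernoulliKernel_comp_true (hg : Measurable g) (P : Measure α) :
    (bernoulliKernel g hg ∘ₘ P).real {true} = ∫ x, (g x : ℝ) ∂P := by
  rw [measureReal_def, Measure.bind_apply (measurableSet_singleton true)
    (Kernel.aemeasurable _), integral_eq_lintegral_of_nonneg_ae
    (Filter.Eventually.of_forall fun x => (g x).2.1) (by fun_prop)]
  simp [bernoulliKernel, ← ENNReal.ofReal_coe_nnreal]

lemma binKL_integral_le_klDiv (P Q : Measure α) [IsProbabilityMeasure P] [IsProbabilityMeasure Q]
    (hg : Measurable g) :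
    binKL (∫ x, (g x : ℝ) ∂P) (∫ x, (g x : ℝ) ∂Q) ≤ klDiv P Q := by
  set κ := bernoulliKernel g hg
  calc binKL (∫ x, (g x : ℝ) ∂P) (∫ x, (g x : ℝ) ∂Q)
    _ = klDiv (κ ∘ₘ P) (κ ∘ₘ Q) := by
        rw [klDiv_eq_binKL, measureReal_bernoulliKernel_comp_true,
          measureReal_bernoulliKernel_comp_true]
    _ = InformationTheory.klDiv (κ ∘ₘ P) (κ ∘ₘ Q) :=
        klDiv_eq_informationTheory_klDiv (by rw [measure_univ, measure_univ])
    _ ≤ InformationTheory.klDiv P Q := InformationTheory.klDiv_comp_right_le P Q κ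
    _ = klDiv P Q := (klDiv_eq_informationTheory_klDiv (by rw [measure_univ, measure_univ])).symm

end

theorem change_of_measure_binary_kl_general
    {Ω 𝒳 𝒴 : Type*} [MeasurableSpace Ω] [MeasurableSpace 𝒳] [MeasurableSpace 𝒴]
    (μ : Measure Ω) [IsProbabilityMeasure μ]
    (X : Ω → 𝒳) (Y Y' : Ω → 𝒴)
    (hX : Measurable X) (hY : Measurable Y) (hY' : Measurable Y')
    (hlaw : μ.map Y' = μ.map Y)
    (hindep : IndepFun X Y' μ)
    (g : 𝒳 → 𝒴 → ℝ) (hg : Measurable (Function.uncurry g))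
    (hbound : ∀ x y, g x y ∈ Set.Icc (0 : ℝ) 1) :
    binKL (∫ ω, g (X ω) (Y ω) ∂μ) (∫ ω, g (X ω) (Y' ω) ∂μ) ≤ mutualInfo μ X Y := by
  have hXY : Measurable fun ω => (X ω, Y ω) := hX.prodMk hY
  have hXY' : Measurable fun ω => (X ω, Y' ω) := hX.prodMk hY'
  have h_prod : μ.map (fun ω => (X ω, Y' ω)) = (μ.map X).prod (μ.map Y) := by
    rw [← hlaw]
    exact (indepFun_iff_map_prod_eq_prod_map_map hX.aemeasurable hY'.aemeasurable).mp hindep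
  have := Measure.isProbabilityMeasure_map (μ := μ) hXY.aemeasurable
  have := Measure.isProbabilityMeasure_map (μ := μ) hXY'.aemeasurable
  have key := binKL_integral_le_klDiv
    (μ.map fun ω => (X ω, Y ω)) (μ.map fun ω => (X ω, Y' ω))
    (g := fun z => ⟨Function.uncurry g z, hbound z.1 z.2⟩) hg.subtype_mk
  rwa [integral_map hXY.aemeasurable hg.aestronglyMeasurable,
    integral_map hXY'.aemeasurable hg.aestronglyMeasurable, h_prod] at key

/-- **Change of measure, binary KL form.**
If `Y'` has the same marginal as `Y`, is independent of `X`, the joint law of `(X,Y)` is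
absolutely continuous w.r.t. that of `(X,Y')`, and `g : 𝒳 × 𝒴 → [0,1]` is measurable, then
`d( E[g(X,Y)] ‖ E[g(X,Y')] ) ≤ I(X;Y)`. -/
theorem change_of_measure_binary_kl
    {Ω 𝒳 𝒴 : Type*} [MeasurableSpace Ω] [MeasurableSpace 𝒳] [MeasurableSpace 𝒴]
    (μ : Measure Ω) [IsProbabilityMeasure μ]
    (X : Ω → 𝒳) (Y Y' : Ω → 𝒴)
    (hX : Measurable X) (hY : Measurable Y) (hY' : Measurable Y')
    (hlaw : μ.map Y' = μ.map Y)
    (hindep : IndepFun X Y' μ)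
    (hac : (μ.map fun ω => (X ω, Y ω)) ≪ (μ.map fun ω => (X ω, Y' ω)))
    (g : 𝒳 → 𝒴 → ℝ) (hg : Measurable (Function.uncurry g))
    (hbound : ∀ x y, g x y ∈ Set.Icc (0 : ℝ) 1) :
    binKL (∫ ω, g (X ω) (Y ω) ∂μ) (∫ ω, g (X ω) (Y' ω) ∂μ) ≤ mutualInfo μ X Y :=
  change_of_measure_binary_kl_general μ X Y Y' hX hY hY' hlaw hindep g hg hbound
end

section
/- One-step square-root bound (Theorem 2): In the meta-learning CMI setup, |L̄_pop − L̂_train| ≤ (1/(n·n̂))·Σ_{i=1}^{n̂} Σ_{j=1}^{n} E_{Z̃}[ sqrt( 2·I^{Z̃}( λ^{(i)}_j ; Ŝ_i, S^{(i)}_j ) ) ], where S^{(i)}_j = (S^{(i,0)}_j, S^{(i,1)}_j). -/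
open MeasureTheory ProbabilityTheory Real
open scoped ENNReal ProbabilityTheory

/-- Conditional mutual information `I(X;Y|V)`, expressed as the KL divergence between the
joint law of `(V,(X,Y))` and the measure in which `X` and `Y` are conditionally independent
given `V` (with the same conditional marginals). -/
noncomputable def condMutualInfo {Ω α β γ : Type*} [MeasurableSpace Ω]
    [MeasurableSpace α] [StandardBorelSpace α] [Nonempty α]
    [MeasurableSpace β] [StandardBorelSpace β] [Nonempty β]
    [MeasurableSpace γ]
    (μ : Measure Ω) [IsFiniteMeasure μ] (X : Ω → α) (Y : Ω → β) (V : Ω → γ) : ℝ≥0∞ :=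
  klDiv (μ.map fun ω => (V ω, (X ω, Y ω)))
    ((μ.map V) ⊗ₘ ((condDistrib X V μ).prod (condDistrib Y V μ)))

/-- Disintegrated mutual information `I^V(X;Y)` evaluated at the outcome `ω`:
the KL divergence between the conditional joint law of `(X,Y)` given `V` and the product of
the conditional marginals, evaluated at `V ω`. -/
noncomputable def dMutualInfo {Ω α β γ : Type*} [MeasurableSpace Ω]
    [MeasurableSpace α] [StandardBorelSpace α] [Nonempty α]
    [MeasurableSpace β] [StandardBorelSpace β] [Nonempty β]
    [MeasurableSpace γ]
    (μ : Measure Ω) [IsFiniteMeasure μ] (X : Ω → α) (Y : Ω → β) (V : Ω → γ) (ω : Ω) : ℝ≥0∞ :=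
  klDiv ((condDistrib (fun ω' => (X ω', Y ω')) V μ) (V ω))
    (((condDistrib X V μ) (V ω)).prod ((condDistrib Y V μ) (V ω)))

/-- **The meta-learning CMI setup.**
There are `nt` task pairs and `n` sample pairs per task.  Tasks are drawn i.i.d. from the
task distribution `τdistro`; the meta-supersample `Zt` consists of samples drawn independently
from the in-task distributions `D τ`.  The membership variables `Sh` (meta membership) and
`S` (in-task membership) have i.i.d. Bernoulli(1/2) entries, independent of the data and of the
algorithmic randomness `Rhat, R`.  The meta learner `A` and base learner `B` produce losses
via the `[0,1]`-valued loss function `loss`. -/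
structure MetaSetup (Ω 𝒯 𝒵 𝒰 𝒲 Rh Rb : Type*)
    [MeasurableSpace Ω] [MeasurableSpace 𝒯] [MeasurableSpace 𝒵] [MeasurableSpace 𝒰]
    [MeasurableSpace 𝒲] [MeasurableSpace Rh] [MeasurableSpace Rb]
    (nt n : ℕ) where
  μ : Measure Ω
  prob : IsProbabilityMeasure μ
  τdistro : Measure 𝒯
  probτ : IsProbabilityMeasure τdistro
  D : Kernel 𝒯 𝒵
  markovD : IsMarkovKernel D
  ρh : Measure Rh
  probρh : IsProbabilityMeasure ρh
  ρ : Measure Rb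
  probρ : IsProbabilityMeasure ρ
  Zt : Ω → Fin nt → Fin 2 → Fin n → Fin 2 → 𝒵
  Sh : Ω → Fin nt → Fin 2
  S : Ω → Fin nt → Fin 2 → Fin n → Fin 2
  Rhat : Ω → Rh
  R : Ω → Fin nt → Rb
  A : (Fin nt → Fin n → 𝒵) → Rh → 𝒰
  B : (Fin n → 𝒵) → Rb → 𝒰 → 𝒲
  loss : 𝒲 → 𝒵 → ℝ
  loss_mem : ∀ w z, loss w z ∈ Set.Icc (0 : ℝ) 1
  meas_Zt : Measurable Zt
  meas_Sh : Measurable Sh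
  meas_S : Measurable S
  meas_Rhat : Measurable Rhat
  meas_R : Measurable R
  meas_A : Measurable fun p : (Fin nt → Fin n → 𝒵) × Rh => A p.1 p.2
  meas_B : Measurable fun p : (Fin n → 𝒵) × Rb × 𝒰 => B p.1 p.2.1 p.2.2
  meas_loss : Measurable fun p : 𝒲 × 𝒵 => loss p.1 p.2
  law_Zt : μ.map Zt
    = Measure.pi fun _i : Fin nt => Measure.pi fun _k : Fin 2 =>
        τdistro.bind fun t => Measure.pi fun _j : Fin n => Measure.pi fun _l : Fin 2 => D t
  law_S : μ.map (fun ω => (Sh ω, S ω))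
    = ((PMF.uniformOfFintype (Fin nt → Fin 2)).toMeasure).prod
        ((PMF.uniformOfFintype (Fin nt → Fin 2 → Fin n → Fin 2)).toMeasure)
  law_R : μ.map (fun ω => (Rhat ω, R ω)) = ρh.prod (Measure.pi fun _ : Fin nt => ρ)
  indep₁ : IndepFun Zt (fun ω => ((Sh ω, S ω), (Rhat ω, R ω))) μ
  indep₂ : IndepFun (fun ω => (Sh ω, S ω)) (fun ω => (Rhat ω, R ω)) μ

namespace MetaSetup

variable {Ω 𝒯 𝒵 𝒰 𝒲 Rh Rb : Type*}
    [MeasurableSpace Ω] [MeasurableSpace 𝒯] [MeasurableSpace 𝒵] [MeasurableSpace 𝒰]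
    [MeasurableSpace 𝒲] [MeasurableSpace Rh] [MeasurableSpace Rb]
    {nt n : ℕ}

instance (M : MetaSetup Ω 𝒯 𝒵 𝒰 𝒲 Rh Rb nt n) : IsProbabilityMeasure M.μ := M.prob

variable (M : MetaSetup Ω 𝒯 𝒵 𝒰 𝒲 Rh Rb nt n)

/-- Output `U` of the meta learner. -/
noncomputable def U (ω : Ω) : 𝒰 :=
  M.A (fun i j => M.Zt ω i (M.Sh ω i) j (M.S ω i (M.Sh ω i) j)) (M.Rhat ω)

/-- Output `W^{(i,k)}` of the base learner for task `(i,k)`. -/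
noncomputable def W (i : Fin nt) (k : Fin 2) (ω : Ω) : 𝒲 :=
  M.B (fun j => M.Zt ω i k j (M.S ω i k j)) (M.R ω i) (M.U ω)

/-- The loss `λ^{(i,k)}_{j,l}` incurred on sample `(j,l)` of task `(i,k)`. -/
noncomputable def lam (i : Fin nt) (k : Fin 2) (j : Fin n) (l : Fin 2) (ω : Ω) : ℝ :=
  M.loss (M.W i k ω) (M.Zt ω i k j l)

/-- The average meta-population loss `L̄_pop`. -/
noncomputable def Lpop : ℝ :=
  (n * nt : ℝ)⁻¹ * ∑ i : Fin nt, ∑ j : Fin n,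
    ∫ ω, M.lam i (1 - M.Sh ω i) j (1 - M.S ω i (1 - M.Sh ω i) j) ω ∂M.μ

/-- The average meta-training loss `L̂_train`. -/
noncomputable def Ltrain : ℝ :=
  (n * nt : ℝ)⁻¹ * ∑ i : Fin nt, ∑ j : Fin n,
    ∫ ω, M.lam i (M.Sh ω i) j (M.S ω i (M.Sh ω i) j) ω ∂M.μ

/-- The average auxiliary test loss `L̄_test` (test data of observed tasks). -/
noncomputable def Ltest : ℝ :=
  (n * nt : ℝ)⁻¹ * ∑ i : Fin nt, ∑ j : Fin n,
    ∫ ω, M.lam i (M.Sh ω i) j (1 - M.S ω i (M.Sh ω i) j) ω ∂M.μ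

/-- The average auxiliary training loss `L̂_aux` (training data of unobserved tasks). -/
noncomputable def Laux : ℝ :=
  (n * nt : ℝ)⁻¹ * ∑ i : Fin nt, ∑ j : Fin n,
    ∫ ω, M.lam i (1 - M.Sh ω i) j (M.S ω i (1 - M.Sh ω i) j) ω ∂M.μ

end MetaSetup

/-!
For a task pair `i` and sample pair `j`, write the population-minus-training loss as
`g(λ^{(i)}_j, y)` with `y = (Ŝ_i, S^{(i)}_j)`; flipping `y ↦ 1 - y` swaps the two losses, so `g` is
odd in `y`. The flip preserves the uniform law of `y`, and `y` is independent of `Z̃`. Hence, given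
`Z̃`, `g` averages to zero under the product of the conditional laws of `λ^{(i)}_j` and `y`, and
Pinsker's inequality bounds the conditional mean of `g` under the true joint law by
`√(2 I^{Z̃}(λ^{(i)}_j; y))`. Averaging over `Z̃` and summing over `(i, j)` gives the bound.
-/

lemma klDiv_eq_informationTheory_klDiv_s7 {α : Type*} [MeasurableSpace α] (μ ν : Measure α)
    [IsProbabilityMeasure μ] [IsProbabilityMeasure ν] :
    klDiv μ ν = InformationTheory.klDiv μ ν := by
  by_cases h : μ ≪ ν ∧ Integrable (llr μ ν) μ
  · simp [_root_.klDiv, h, InformationTheory.klDiv_of_ac_of_integrable h.1 h.2]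
  · rw [_root_.klDiv, if_neg h, eq_comm, InformationTheory.klDiv_eq_top_iff]
    exact fun hac hint => h ⟨hac, hint⟩

lemma monotoneOn_add_one_mul_log_sub :
    MonotoneOn (fun x : ℝ => (x + 1) * log x - 2 * (x - 1)) (Set.Ioi 0) := by
  refine monotoneOn_of_hasDerivWithinAt_nonneg (f' := fun x => log x + x⁻¹ - 1) (convex_Ioi 0)
    ?_ (fun x hx => ?_) (fun x hx => ?_)
  · exact ContinuousOn.sub (by fun_prop (disch := grind)) (by fun_prop)
  · rw [interior_Ioi] at hx ⊢
    have hx0 : x ≠ 0 := ne_of_gt hx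
    refine HasDerivAt.hasDerivWithinAt ?_
    exact ((((hasDerivAt_id x).add_const 1).mul (hasDerivAt_log hx0)).sub
      (((hasDerivAt_id x).sub_const 1).const_mul 2)).congr_deriv
      (by simp only [id]; field_simp; ring)
  · rw [interior_Ioi] at hx
    linarith [one_sub_inv_le_log_of_pos hx]

lemma three_mul_sq_sub_one_le_mul_klFun {x : ℝ} (hx : 0 ≤ x) :
    3 * (x - 1) ^ 2 ≤ (2 * x + 4) * InformationTheory.klFun x := by
  set ψ : ℝ → ℝ := fun x => (2 * x + 4) * InformationTheory.klFun x - 3 * (x - 1) ^ 2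
  set g : ℝ → ℝ := fun x => (x + 1) * log x - 2 * (x - 1)
  have hψ : Continuous ψ := by fun_prop (disch := exact InformationTheory.continuous_klFun)
  have hψ' : ∀ y, 0 < y → HasDerivAt ψ (4 * g y) y := by
    intro y hy
    exact ((((hasDerivAt_id y).const_mul 2).add_const 4).mul
      (InformationTheory.hasDerivAt_klFun hy.ne')).sub
      ((((hasDerivAt_id y).sub_const 1).pow 2).const_mul 3) |>.congr_deriv
      (by simp only [InformationTheory.klFun, g, id]; ring)
  suffices ψ 1 ≤ ψ x by simpa [ψ, InformationTheory.klFun_one] using this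
  have hg1 : g 1 = 0 := by simp [g]
  rcases le_total x 1 with hx1 | hx1
  · refine antitoneOn_of_hasDerivWithinAt_nonpos (f' := fun y => 4 * g y) (convex_Icc 0 1)
      hψ.continuousOn (fun y hy => ?_) (fun y hy => ?_) ⟨hx, hx1⟩ ⟨zero_le_one, le_rfl⟩ hx1
    · rw [interior_Icc] at hy ⊢
      exact (hψ' y hy.1).hasDerivWithinAt
    · rw [interior_Icc] at hy
      have := monotoneOn_add_one_mul_log_sub hy.1 (Set.mem_Ioi.2 one_pos) hy.2.le
      linarith
  · refine monotoneOn_of_hasDerivWithinAt_nonneg (f' := fun y => 4 * g y) (convex_Ici 1)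
      hψ.continuousOn (fun y hy => ?_) (fun y hy => ?_) Set.self_mem_Ici hx1 hx1
    · rw [interior_Ici] at hy ⊢
      exact (hψ' y (one_pos.trans hy)).hasDerivWithinAt
    · rw [interior_Ici] at hy
      have := monotoneOn_add_one_mul_log_sub (Set.mem_Ioi.2 one_pos)
        (Set.mem_Ioi.2 (one_pos.trans hy)) hy.le
      linarith

lemma abs_integral_sub_integral_le_integral_abs_rnDeriv_sub_one {α : Type*} [MeasurableSpace α]
    {P Q : Measure α} [IsFiniteMeasure P] [IsFiniteMeasure Q] (hPQ : P ≪ Q) {f : α → ℝ}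
    (hf : Measurable f) (hf1 : ∀ x, |f x| ≤ 1) :
    |∫ x, f x ∂P - ∫ x, f x ∂Q| ≤ ∫ x, |(P.rnDeriv Q x).toReal - 1| ∂Q := by
  have hfQ : Integrable f Q := .of_bound hf.aestronglyMeasurable 1 (ae_of_all _ hf1)
  have hfP : Integrable (fun x => (P.rnDeriv Q x).toReal • f x) Q :=
    (integrable_rnDeriv_smul_iff hPQ).2 (.of_bound hf.aestronglyMeasurable 1 (ae_of_all _ hf1))
  rw [← integral_rnDeriv_smul hPQ, ← integral_sub hfP hfQ, ← Real.norm_eq_abs]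
  refine norm_integral_le_of_norm_le
    (Measure.integrable_toReal_rnDeriv.sub (integrable_const 1)).abs (ae_of_all _ fun x => ?_)
  rw [smul_eq_mul, ← sub_one_mul, norm_mul, Real.norm_eq_abs, Real.norm_eq_abs]
  exact mul_le_of_le_one_right (abs_nonneg _) (hf1 x)

lemma abs_sub_one_le_sqrt_klFun_mul_sqrt {x : ℝ} (hx : 0 ≤ x) :
    |x - 1| ≤ √(InformationTheory.klFun x) * √((2 * x + 4) / 3) := by
  rw [← Real.sqrt_mul (InformationTheory.klFun_nonneg hx), ← Real.sqrt_sq_eq_abs]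
  refine Real.sqrt_le_sqrt ?_
  linarith [three_mul_sq_sub_one_le_mul_klFun hx]

/-- **Pinsker's inequality.** With `h = dP/dQ`, the gap is at most `∫ |h - 1| dQ`; Cauchy–Schwarz
against the weight `(2h + 4) / 3`, which has `Q`-mass `2`, and
`3 (h - 1)² ≤ (2h + 4) klFun h` bound this by `√(2 ∫ klFun h dQ)`. -/
theorem ofReal_abs_integral_sub_integral_le_rpow_klDiv {α : Type*} [MeasurableSpace α]
    {P Q : Measure α} [IsProbabilityMeasure P] [IsProbabilityMeasure Q] {f : α → ℝ}
    (hf : Measurable f) (hf1 : ∀ x, |f x| ≤ 1) :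
    ENNReal.ofReal |∫ x, f x ∂P - ∫ x, f x ∂Q| ≤ (2 * klDiv P Q) ^ (1 / 2 : ℝ) := by
  rw [klDiv_eq_informationTheory_klDiv_s7]
  by_cases hPQ : P ≪ Q
  swap
  · simp [hPQ]
  rw [InformationTheory.klDiv_eq_lintegral_klFun_of_ac hPQ]
  set h : α → ℝ := fun x => (P.rnDeriv Q x).toReal
  have hh0 : ∀ x, 0 ≤ h x := fun x => ENNReal.toReal_nonneg
  have hhQ : Integrable h Q := Measure.integrable_toReal_rnDeriv
  have hw : ∫⁻ x, ENNReal.ofReal ((2 * h x + 4) / 3) ∂Q = 2 := by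
    have hint : Integrable (fun x => (2 * h x + 4) / 3) Q :=
      ((hhQ.const_mul 2).add (integrable_const 4)).div_const 3
    rw [← ofReal_integral_eq_lintegral_ofReal hint
        (ae_of_all _ fun x => show (0 : ℝ) ≤ _ by linarith [hh0 x]),
      integral_div, integral_add (hhQ.const_mul 2) (integrable_const 4), integral_const_mul,
      Measure.integral_toReal_rnDeriv hPQ]
    norm_num
  calc ENNReal.ofReal |∫ x, f x ∂P - ∫ x, f x ∂Q|
      ≤ ENNReal.ofReal (∫ x, |h x - 1| ∂Q) :=
        ENNReal.ofReal_le_ofReal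
          (abs_integral_sub_integral_le_integral_abs_rnDeriv_sub_one hPQ hf hf1)
    _ = ∫⁻ x, ENNReal.ofReal |h x - 1| ∂Q :=
        ofReal_integral_eq_lintegral_ofReal (hhQ.sub (integrable_const 1)).abs
          (ae_of_all _ fun _ => abs_nonneg _)
    _ ≤ ∫⁻ x, ENNReal.ofReal (InformationTheory.klFun (h x)) ^ (1 / 2 : ℝ)
          * ENNReal.ofReal ((2 * h x + 4) / 3) ^ (1 / 2 : ℝ) ∂Q := by
        refine lintegral_mono fun x => ?_
        rw [ENNReal.ofReal_rpow_of_nonneg (InformationTheory.klFun_nonneg (hh0 x)) (by norm_num),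
          ENNReal.ofReal_rpow_of_nonneg (by linarith [hh0 x]) (by norm_num),
          ← ENNReal.ofReal_mul (Real.rpow_nonneg (InformationTheory.klFun_nonneg (hh0 x)) _),
          ← Real.sqrt_eq_rpow, ← Real.sqrt_eq_rpow]
        exact ENNReal.ofReal_le_ofReal (abs_sub_one_le_sqrt_klFun_mul_sqrt (hh0 x))
    _ ≤ (∫⁻ x, ENNReal.ofReal (InformationTheory.klFun (h x)) ∂Q) ^ (1 / 2 : ℝ)
          * (∫⁻ x, ENNReal.ofReal ((2 * h x + 4) / 3) ∂Q) ^ (1 / 2 : ℝ) :=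
        ENNReal.lintegral_mul_norm_pow_le (by fun_prop) (by fun_prop) (by norm_num) (by norm_num)
          (by norm_num)
    _ = _ := by rw [hw, mul_comm, ENNReal.mul_rpow_of_nonneg _ _ (by norm_num)]

lemma integral_eq_zero_of_measurePreserving_of_comp_eq_neg {γ : Type*} [MeasurableSpace γ]
    {ρ : Measure γ} {τ : γ → γ} (hτ : MeasurePreserving τ ρ ρ) {f : γ → ℝ}
    (hf : AEStronglyMeasurable f ρ) (hodd : ∀ x, f (τ x) = -f x) :
    ∫ x, f x ∂ρ = 0 := by
  have h := integral_map hτ.measurable.aemeasurable (hτ.map_eq ▸ hf)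
  simp only [hτ.map_eq, hodd, integral_neg] at h
  linarith

lemma condDistrib_ae_eq_map_of_indepFun {Ω β γ : Type*} [MeasurableSpace Ω]
    [MeasurableSpace β] [StandardBorelSpace β] [Nonempty β] [MeasurableSpace γ]
    {μ : Measure Ω} [IsProbabilityMeasure μ] {Y : Ω → β} {V : Ω → γ}
    (hY : Measurable Y) (hV : Measurable V) (hindep : IndepFun V Y μ) :
    ∀ᵐ ω ∂μ, condDistrib Y V μ (V ω) = μ.map Y := by
  have h := condDistrib_ae_eq_of_measure_eq_compProd (μ := μ) V hY.aemeasurable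
    (κ := Kernel.const γ (μ.map Y)) (by
      rw [Measure.compProd_const]
      exact (indepFun_iff_map_prod_eq_prod_map_map hV.aemeasurable hY.aemeasurable).mp hindep)
  filter_upwards [ae_of_ae_map hV.aemeasurable h] with ω hω
  rw [hω, Kernel.const_apply]

section Disintegration

variable {Ω α β γ : Type*} [MeasurableSpace Ω]
    [MeasurableSpace α] [StandardBorelSpace α] [Nonempty α]
    [MeasurableSpace β] [StandardBorelSpace β] [Nonempty β] [MeasurableSpace γ]
    {μ : Measure Ω} [IsProbabilityMeasure μ] {X : Ω → α} {Y : Ω → β} {V : Ω → γ}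
    {f : α × β → ℝ}

lemma ae_integral_prod_condDistrib_eq_zero (hY : Measurable Y) (hV : Measurable V)
    (hindep : IndepFun V Y μ) {σ : β → β} (hσ : MeasurePreserving σ (μ.map Y) (μ.map Y))
    (hf : Measurable f) (hodd : ∀ x y, f (x, σ y) = -f (x, y)) :
    ∀ᵐ ω ∂μ, ∫ p, f p ∂(condDistrib X V μ (V ω)).prod (condDistrib Y V μ (V ω)) = 0 := by
  filter_upwards [condDistrib_ae_eq_map_of_indepFun hY hV hindep] with ω hω
  rw [hω]
  exact integral_eq_zero_of_measurePreserving_of_comp_eq_neg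
    ((MeasurePreserving.id _).prod hσ) hf.aestronglyMeasurable fun p => hodd p.1 p.2

theorem ofReal_abs_integral_le_lintegral_rpow_dMutualInfo (hX : Measurable X) (hY : Measurable Y)
    (hV : Measurable V) (hf : Measurable f) (hf1 : ∀ p, |f p| ≤ 1)
    (hf0 : ∀ᵐ ω ∂μ, ∫ p, f p ∂(condDistrib X V μ (V ω)).prod (condDistrib Y V μ (V ω)) = 0) :
    ENNReal.ofReal |∫ ω, f (X ω, Y ω) ∂μ|
      ≤ ∫⁻ ω, (2 * dMutualInfo μ X Y V ω) ^ (1 / 2 : ℝ) ∂μ := by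
  have hXY : Measurable fun ω => (X ω, Y ω) := hX.prodMk hY
  have hdis : ∫ ω, f (X ω, Y ω) ∂μ
      = ∫ ω, ∫ p, f p ∂condDistrib (fun ω => (X ω, Y ω)) V μ (V ω) ∂μ := by
    rw [← integral_condExp hV.comap_le]
    exact integral_congr_ae (condExp_ae_eq_integral_condDistrib hV hXY.aemeasurable
      hf.stronglyMeasurable
      (.of_bound (hf.comp hXY).aestronglyMeasurable 1 (ae_of_all _ fun _ => hf1 _)))
  rw [← Real.enorm_eq_ofReal_abs, hdis]
  refine (enorm_integral_le_lintegral_enorm _).trans (lintegral_mono_ae ?_)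
  filter_upwards [hf0] with ω h0
  rw [Real.enorm_eq_ofReal_abs, ← sub_zero (∫ p, f p ∂_), ← h0]
  exact ofReal_abs_integral_sub_integral_le_rpow_klDiv hf hf1

end Disintegration

lemma measurePreserving_uniformOfFintype {A : Type*} [MeasurableSpace A] [Fintype A] [Nonempty A]
    [MeasurableSingletonClass A] (e : A ≃ A) :
    MeasurePreserving e (PMF.uniformOfFintype A).toMeasure (PMF.uniformOfFintype A).toMeasure := by
  refine ⟨measurable_of_countable e, Measure.ext_of_singleton fun a => ?_⟩
  rw [Measure.map_apply (measurable_of_countable e) (measurableSet_singleton a),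
    ← Equiv.image_symm_eq_preimage, Set.image_singleton,
    PMF.toMeasure_apply_singleton _ _ (measurableSet_singleton _),
    PMF.toMeasure_apply_singleton _ _ (measurableSet_singleton _), PMF.uniformOfFintype_apply,
    PMF.uniformOfFintype_apply]

/-- For `y = (Ŝ_i, S^{(i)}_j)` this reads off the training loss of task pair `i`, sample pair `j`;
at `1 - y` it reads off the held-out sample of the held-out task. -/
def trainEntry (x : Fin 2 → Fin 2 → ℝ) (y : Fin 2 × (Fin 2 → Fin 2)) : ℝ := x y.1 (y.2 y.1)

/-- The clipping is inactive on actual losses; it makes the gap bounded by `1` everywhere, as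
Pinsker's inequality requires. -/
def clippedGap (p : (Fin 2 → Fin 2 → ℝ) × (Fin 2 × (Fin 2 → Fin 2))) : ℝ :=
  max 0 (min 1 (trainEntry p.1 (1 - p.2))) - max 0 (min 1 (trainEntry p.1 p.2))

lemma measurable_clippedGap : Measurable clippedGap :=
  measurable_from_prod_countable_left fun y => by simp only [clippedGap, trainEntry]; fun_prop

lemma abs_clippedGap_le_one (p) : |clippedGap p| ≤ 1 :=
  abs_sub_le_of_nonneg_of_le (le_max_left _ _) (max_le zero_le_one (min_le_left _ _))
    (le_max_left _ _) (max_le zero_le_one (min_le_left _ _))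

lemma clippedGap_one_sub (x y) : clippedGap (x, 1 - y) = -clippedGap (x, y) := by
  simp only [clippedGap, sub_sub_cancel, neg_sub]

lemma clippedGap_of_mem_Icc {x : Fin 2 → Fin 2 → ℝ} (hx : ∀ k l, x k l ∈ Set.Icc 0 1) (y) :
    clippedGap (x, y) = trainEntry x (1 - y) - trainEntry x y := by
  simp only [clippedGap, trainEntry]
  rw [min_eq_right (hx _ _).2, max_eq_right (hx _ _).1, min_eq_right (hx _ _).2,
    max_eq_right (hx _ _).1]

namespace MetaSetup

variable {Ω 𝒯 𝒵 𝒰 𝒲 Rh Rb : Type*}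
    [MeasurableSpace Ω] [MeasurableSpace 𝒯] [MeasurableSpace 𝒵] [MeasurableSpace 𝒰]
    [MeasurableSpace 𝒲] [MeasurableSpace Rh] [MeasurableSpace Rb]
    {nt n : ℕ} (M : MetaSetup Ω 𝒯 𝒵 𝒰 𝒲 Rh Rb nt n)

/-- The losses `λ^{(i)}_j = (λ^{(i,k)}_{j,l})_{k,l}`. -/
noncomputable def lossArray (i : Fin nt) (j : Fin n) (ω : Ω) : Fin 2 → Fin 2 → ℝ :=
  fun k l => M.lam i k j l ω

/-- The memberships `(Ŝ_i, S^{(i)}_j)`. -/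
def membership (i : Fin nt) (j : Fin n) (ω : Ω) : Fin 2 × (Fin 2 → Fin 2) :=
  (M.Sh ω i, fun k => M.S ω i k j)

lemma measurable_U : Measurable M.U := by
  have hsel : Measurable fun p : (Fin nt → Fin 2 → Fin n → Fin 2 → 𝒵) ×
      ((Fin nt → Fin 2) × (Fin nt → Fin 2 → Fin n → Fin 2)) =>
      fun i j => p.1 i (p.2.1 i) j (p.2.2 i (p.2.1 i) j) :=
    measurable_from_prod_countable_left fun q => by dsimp only; fun_prop
  exact M.meas_A.comp ((hsel.comp (M.meas_Zt.prodMk (M.meas_Sh.prodMk M.meas_S))).prodMk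
    M.meas_Rhat)

lemma measurable_W (i : Fin nt) (k : Fin 2) : Measurable (M.W i k) := by
  have hsel : Measurable fun p : (Fin nt → Fin 2 → Fin n → Fin 2 → 𝒵) ×
      (Fin nt → Fin 2 → Fin n → Fin 2) => fun j => p.1 i k j (p.2 i k j) :=
    measurable_from_prod_countable_left fun q => by dsimp only; fun_prop
  exact M.meas_B.comp ((hsel.comp (M.meas_Zt.prodMk M.meas_S)).prodMk
    (((measurable_pi_apply i).comp M.meas_R).prodMk M.measurable_U))

lemma measurable_lossArray (i : Fin nt) (j : Fin n) : Measurable (M.lossArray i j) :=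
  measurable_pi_lambda _ fun k => measurable_pi_lambda _ fun l =>
    M.meas_loss.comp ((M.measurable_W i k).prodMk (by have := M.meas_Zt; fun_prop))

lemma measurable_membership (i : Fin nt) (j : Fin n) : Measurable (M.membership i j) :=
  (measurable_of_countable fun q : (Fin nt → Fin 2) × (Fin nt → Fin 2 → Fin n → Fin 2) =>
    (q.1 i, fun k => q.2 i k j)).comp (M.meas_Sh.prodMk M.meas_S)

lemma indepFun_Zt_membership (i : Fin nt) (j : Fin n) :
    IndepFun M.Zt (M.membership i j) M.μ := by
  have hsel : Measurable fun p : ((Fin nt → Fin 2) × (Fin nt → Fin 2 → Fin n → Fin 2)) ×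
      (Rh × (Fin nt → Rb)) => (p.1.1 i, fun k => p.1.2 i k j) :=
    (measurable_of_countable fun q : (Fin nt → Fin 2) × (Fin nt → Fin 2 → Fin n → Fin 2) =>
      (q.1 i, fun k => q.2 i k j)).comp measurable_fst
  exact M.indep₁.comp measurable_id hsel

lemma measurePreserving_one_sub_membership (i : Fin nt) (j : Fin n) :
    MeasurePreserving (1 - ·) (M.μ.map (M.membership i j)) (M.μ.map (M.membership i j)) := by
  set g := fun q : (Fin nt → Fin 2) × (Fin nt → Fin 2 → Fin n → Fin 2) =>
    (q.1 i, fun k => q.2 i k j)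
  have hg : Measurable g := measurable_of_countable g
  have hflip : MeasurePreserving (1 - ·) (M.μ.map fun ω => (M.Sh ω, M.S ω))
      (M.μ.map fun ω => (M.Sh ω, M.S ω)) := by
    rw [M.law_S]
    exact (measurePreserving_uniformOfFintype (Equiv.subLeft 1)).prod
      (measurePreserving_uniformOfFintype (Equiv.subLeft 1))
  have hcomm : (fun y => 1 - y) ∘ g = g ∘ (fun q => 1 - q) := rfl
  have hlaw : M.μ.map (M.membership i j) = (M.μ.map fun ω => (M.Sh ω, M.S ω)).map g :=
    (Measure.map_map hg (M.meas_Sh.prodMk M.meas_S)).symm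
  refine ⟨measurable_of_countable _, ?_⟩
  rw [hlaw, Measure.map_map (measurable_of_countable _) hg, hcomm,
    ← Measure.map_map hg hflip.measurable, hflip.map_eq]

lemma integral_lam_sub_eq_integral_clippedGap (i : Fin nt) (j : Fin n) :
    ∫ ω, (M.lam i (1 - M.Sh ω i) j (1 - M.S ω i (1 - M.Sh ω i) j) ω
        - M.lam i (M.Sh ω i) j (M.S ω i (M.Sh ω i) j) ω) ∂M.μ
      = ∫ ω, clippedGap (M.lossArray i j ω, M.membership i j ω) ∂M.μ := by
  refine integral_congr_ae (ae_of_all _ fun ω => ?_)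
  dsimp only
  rw [clippedGap_of_mem_Icc (x := M.lossArray i j ω) fun k l => M.loss_mem _ _]
  rfl

lemma integrable_trainEntry_lossArray (i : Fin nt) (j : Fin n) {Y : Ω → Fin 2 × (Fin 2 → Fin 2)}
    (hY : Measurable Y) : Integrable (fun ω => trainEntry (M.lossArray i j ω) (Y ω)) M.μ := by
  have hmeas : Measurable fun p : (Fin 2 → Fin 2 → ℝ) × (Fin 2 × (Fin 2 → Fin 2)) =>
      trainEntry p.1 p.2 :=
    measurable_from_prod_countable_left fun y => by simp only [trainEntry]; fun_prop
  refine .of_bound (hmeas.comp ((M.measurable_lossArray i j).prodMk hY)).aestronglyMeasurable 1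
    (ae_of_all _ fun ω => ?_)
  obtain ⟨h0, h1⟩ := M.loss_mem (M.W i (Y ω).1 ω) (M.Zt ω i (Y ω).1 j ((Y ω).2 (Y ω).1))
  exact abs_le.2 ⟨(neg_nonpos.2 zero_le_one).trans h0, h1⟩

lemma Lpop_sub_Ltrain_eq : M.Lpop - M.Ltrain = (n * nt : ℝ)⁻¹ * ∑ i : Fin nt, ∑ j : Fin n,
    ∫ ω, (M.lam i (1 - M.Sh ω i) j (1 - M.S ω i (1 - M.Sh ω i) j) ω
        - M.lam i (M.Sh ω i) j (M.S ω i (M.Sh ω i) j) ω) ∂M.μ := by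
  rw [Lpop, Ltrain, ← mul_sub, ← Finset.sum_sub_distrib]
  congr 1
  refine Finset.sum_congr rfl fun i _ => ?_
  rw [← Finset.sum_sub_distrib]
  refine Finset.sum_congr rfl fun j _ => (integral_sub ?_ ?_).symm
  · exact M.integrable_trainEntry_lossArray i j
      (measurable_of_countable (1 - ·) |>.comp (M.measurable_membership i j))
  · exact M.integrable_trainEntry_lossArray i j (M.measurable_membership i j)

lemma enorm_integral_lam_sub_le (i : Fin nt) (j : Fin n) :
    ‖∫ ω, (M.lam i (1 - M.Sh ω i) j (1 - M.S ω i (1 - M.Sh ω i) j) ω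
        - M.lam i (M.Sh ω i) j (M.S ω i (M.Sh ω i) j) ω) ∂M.μ‖ₑ
      ≤ ∫⁻ ω, (2 * dMutualInfo M.μ (M.lossArray i j) (M.membership i j) M.Zt ω) ^ (1 / 2 : ℝ)
          ∂M.μ := by
  rw [M.integral_lam_sub_eq_integral_clippedGap, Real.enorm_eq_ofReal_abs]
  exact ofReal_abs_integral_le_lintegral_rpow_dMutualInfo (M.measurable_lossArray i j)
    (M.measurable_membership i j) M.meas_Zt measurable_clippedGap abs_clippedGap_le_one
    (ae_integral_prod_condDistrib_eq_zero (M.measurable_membership i j) M.meas_Zt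
      (M.indepFun_Zt_membership i j) (M.measurePreserving_one_sub_membership i j)
      measurable_clippedGap clippedGap_one_sub)

end MetaSetup

open MetaSetup in
/-- **One-step square-root bound (Theorem 2).**
`|L̄_pop − L̂_train| ≤ (1/(n·n̂)) Σ_{i,j} E_{Z̃}[ sqrt( 2 I^{Z̃}(λ^{(i)}_j; Ŝ_i, S^{(i)}_j) ) ]`. -/
theorem one_step_sqrt_bound
    {Ω 𝒯 𝒵 𝒰 𝒲 Rh Rb : Type*}
    [MeasurableSpace Ω] [MeasurableSpace 𝒯] [MeasurableSpace 𝒵] [MeasurableSpace 𝒰]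
    [MeasurableSpace 𝒲] [MeasurableSpace Rh] [MeasurableSpace Rb]
    {nt n : ℕ} (M : MetaSetup Ω 𝒯 𝒵 𝒰 𝒲 Rh Rb nt n) :
    ENNReal.ofReal |M.Lpop - M.Ltrain|
      ≤ ((n * nt : ℕ) : ℝ≥0∞)⁻¹ * ∑ i : Fin nt, ∑ j : Fin n,
          ∫⁻ ω, (2 * dMutualInfo M.μ
              (fun ω' => fun k l : Fin 2 => M.lam i k j l ω')
              (fun ω' => (M.Sh ω' i, fun k : Fin 2 => M.S ω' i k j))
              (fun ω' => M.Zt ω') ω) ^ (1/2 : ℝ) ∂M.μ := by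
  rw [← Real.enorm_eq_ofReal_abs, M.Lpop_sub_Ltrain_eq, enorm_mul]
  refine mul_le_mul' ?_ ?_
  · rw [Real.enorm_eq_ofReal_abs, abs_of_nonneg (by positivity), ← Nat.cast_mul,
      ← ENNReal.ofReal_natCast]
    exact ENNReal.ofReal_inv_le
  · exact (enorm_sum_le _ _).trans <| Finset.sum_le_sum fun i _ => (enorm_sum_le _ _).trans <|
      Finset.sum_le_sum fun j _ => M.enorm_integral_lam_sub_le i j
end

section
/- Corollary 3 (interpolating one-step binary KL bound): In the meta-learning CMI setup, if L̂_train = 0, then L̄_pop ≤ 4 − 4·exp( −(1/(n·n̂))·Σ_{i,j} I(λ^{(i)}_j; Ŝ_i, S^{(i)}_j | Z̃) ) ≤ (4/(n·n̂))·Σ_{i,j} I(λ^{(i)}_j; Ŝ_i, S^{(i)}_j | Z̃). -/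
open MeasureTheory ProbabilityTheory Real
open scoped ENNReal ProbabilityTheory

open Classical in
/-- `exp(-x)` for `x : ℝ≥0∞`, with `exp(-∞) = 0`. -/
noncomputable def expNeg (x : ℝ≥0∞) : ℝ :=
  if x = ⊤ then 0 else Real.exp (-x.toReal)

/-!
Fix a task pair `i` and a sample pair `j`, and put `V = Z̃`, `X = λ^{(i)}_j`,
`Y = (Ŝ_i, S^{(i)}_j)`. The training loss is a `[0, 1]`-valued function `f (V, X, Y)` with mean
zero under the joint law `P`, so `P` is carried by `{f = 0}`. Jensen's inequality for `-llr P Q`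
gives `Q {f = 0} ≥ exp (-KL(P ‖ Q))`, where `Q` makes `X` and `Y` conditionally independent
given `V`; hence `E_Q f ≤ 1 - exp (-I(X; Y | V))`. As `Y` is uniform and independent of `V`,
under `Q` it is a fresh uniform draw, so `E_Q f` is a quarter of the sum of the four losses
`λ^{(i,k)}_{j,l}`, which dominates the population loss. Averaging over `(i, j)` with the
convexity of `t ↦ exp (-t)` gives the first bound, and `1 - exp (-t) ≤ t` the second.
-/

lemma expNeg_nonneg (x : ℝ≥0∞) : 0 ≤ expNeg x := by
  unfold expNeg; split_ifs <;> positivity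

lemma expNeg_of_ne_top {x : ℝ≥0∞} (hx : x ≠ ⊤) : expNeg x = exp (-x.toReal) := if_neg hx

lemma ofReal_sub_mul_expNeg_le {c : ℝ} (hc : 0 ≤ c) (x : ℝ≥0∞) :
    ENNReal.ofReal (c - c * expNeg x) ≤ ENNReal.ofReal c * x := by
  rcases eq_or_ne x ⊤ with rfl | hx
  · rcases hc.eq_or_lt with rfl | hc
    · simp
    · simp [ENNReal.mul_top (ENNReal.ofReal_pos.2 hc).ne']
  have hexp : 1 - x.toReal ≤ exp (-x.toReal) := by linarith [add_one_le_exp (-x.toReal)]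
  calc ENNReal.ofReal (c - c * expNeg x) ≤ ENNReal.ofReal (c * x.toReal) := by
        rw [expNeg_of_ne_top hx]
        exact ENNReal.ofReal_le_ofReal (by nlinarith)
    _ = ENNReal.ofReal c * x := by rw [ENNReal.ofReal_mul hc, ENNReal.ofReal_toReal hx]

lemma expNeg_mean_le {ι : Type*} [Fintype ι] [Nonempty ι] (f : ι → ℝ≥0∞) :
    expNeg ((Fintype.card ι : ℝ≥0∞)⁻¹ * ∑ i, f i) ≤ (Fintype.card ι : ℝ)⁻¹ * ∑ i, expNeg (f i) := by
  have hw : 0 < (Fintype.card ι : ℝ)⁻¹ := by positivity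
  by_cases htop : ∃ i, f i = ⊤
  · obtain ⟨i, hi⟩ := htop
    rw [(ENNReal.sum_eq_top.2 ⟨i, Finset.mem_univ i, hi⟩), ENNReal.mul_top (by simp)]
    simpa [expNeg] using mul_nonneg hw.le (Finset.sum_nonneg fun i _ => expNeg_nonneg (f i))
  push Not at htop
  have hsum : ∑ i, f i ≠ ⊤ := ENNReal.sum_ne_top.2 fun i _ => htop i
  rw [expNeg_of_ne_top (ENNReal.mul_ne_top (by simp) hsum), ENNReal.toReal_mul,
    ENNReal.toReal_sum fun i _ => htop i, ENNReal.toReal_inv, ENNReal.toReal_natCast,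
    Finset.mul_sum, Finset.mul_sum, ← Finset.sum_neg_distrib]
  simp_rw [← mul_neg, expNeg_of_ne_top (htop _), ← smul_eq_mul]
  exact convexOn_exp.map_sum_le (fun _ _ => hw.le) (by simp [Finset.card_univ])
    fun _ _ => Set.mem_univ _

lemma mean_le_sub_mul_expNeg_mean {ι : Type*} [Fintype ι] [Nonempty ι] {c : ℝ} (hc : 0 ≤ c)
    {L : ι → ℝ} {I : ι → ℝ≥0∞} (hL : ∀ i, L i ≤ c - c * expNeg (I i)) :
    (Fintype.card ι : ℝ)⁻¹ * ∑ i, L i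
      ≤ c - c * expNeg ((Fintype.card ι : ℝ≥0∞)⁻¹ * ∑ i, I i) := by
  have hcard : (Fintype.card ι : ℝ) ≠ 0 := by positivity
  calc (Fintype.card ι : ℝ)⁻¹ * ∑ i, L i
      ≤ (Fintype.card ι : ℝ)⁻¹ * ∑ i, (c - c * expNeg (I i)) := by gcongr with i; exact hL i
    _ = c - c * ((Fintype.card ι : ℝ)⁻¹ * ∑ i, expNeg (I i)) := by
      rw [Finset.sum_sub_distrib, Finset.sum_const, Finset.card_univ, nsmul_eq_mul,
        ← Finset.mul_sum]
      field_simp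
    _ ≤ c - c * expNeg ((Fintype.card ι : ℝ≥0∞)⁻¹ * ∑ i, I i) := by
      gcongr; exact expNeg_mean_le I

lemma exp_neg_integral_llr_le {α : Type*} [MeasurableSpace α] {P Q : Measure α}
    [IsProbabilityMeasure P] [IsFiniteMeasure Q] (hPQ : P ≪ Q) (hllr : Integrable (llr P Q) P)
    {A : Set α} (hPA : P Aᶜ = 0) :
    exp (-∫ x, llr P Q x ∂P) ≤ Q.real A := by
  have hexp : (fun x => exp (-llr P Q x)) =ᵐ[P] fun x => (Q.rnDeriv P x).toReal :=
    exp_neg_llr hPQ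
  calc exp (-∫ x, llr P Q x ∂P) = exp (∫ x, -llr P Q x ∂P) := by rw [integral_neg]
    _ ≤ ∫ x, exp (-llr P Q x) ∂P :=
      convexOn_exp.map_integral_le continuous_exp.continuousOn isClosed_univ
        (.of_forall fun _ => Set.mem_univ _) hllr.neg
        (Measure.integrable_toReal_rnDeriv.congr hexp.symm)
    _ = ∫ x in A, (Q.rnDeriv P x).toReal ∂P := by
      rw [integral_congr_ae hexp, Measure.restrict_eq_self_of_ae_mem (ae_iff.2 ?_)]
      exact hPA
    _ ≤ Q.real A := Measure.setIntegral_toReal_rnDeriv_le (measure_ne_top Q A)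

lemma expNeg_klDiv_le {α : Type*} [MeasurableSpace α] {P Q : Measure α}
    [IsProbabilityMeasure P] [IsFiniteMeasure Q] {A : Set α} (hPA : P Aᶜ = 0) :
    expNeg (klDiv P Q) ≤ Q.real A := by
  unfold klDiv
  split_ifs with h
  · rw [expNeg_of_ne_top ENNReal.ofReal_ne_top, ENNReal.toReal_ofReal']
    refine le_trans ?_ (exp_neg_integral_llr_le h.1 h.2 hPA)
    gcongr
    exact le_max_left _ _
  · simp [expNeg]

lemma integral_le_one_sub_expNeg_klDiv {α : Type*} [MeasurableSpace α] {P Q : Measure α}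
    [IsProbabilityMeasure P] [IsProbabilityMeasure Q] {f : α → ℝ} (hf : Measurable f)
    (hf0 : ∀ x, 0 ≤ f x) (hf1 : ∀ x, f x ≤ 1) (hP : ∫ x, f x ∂P = 0) :
    ∫ x, f x ∂Q ≤ 1 - expNeg (klDiv P Q) := by
  set A : Set α := {x | f x = 0}
  have hA : MeasurableSet A := hf (measurableSet_singleton 0)
  have hint : ∀ ν : Measure α, [IsFiniteMeasure ν] → Integrable f ν := fun ν _ =>
    .of_bound hf.aestronglyMeasurable 1 (.of_forall fun x => by
      rw [Real.norm_of_nonneg (hf0 x)]; exact hf1 x)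
  have hPA : P Aᶜ = 0 :=
    ae_iff.1 ((integral_eq_zero_iff_of_nonneg hf0 (hint P)).1 hP)
  have hf_le : f ≤ Aᶜ.indicator 1 := fun x => by
    by_cases hx : x ∈ A
    · simp [show f x = 0 from hx, hx]
    · simp [hx, hf1 x]
  calc ∫ x, f x ∂Q ≤ ∫ x, Aᶜ.indicator 1 x ∂Q :=
        integral_mono (hint Q) ((integrable_const 1).indicator hA.compl) hf_le
    _ = 1 - Q.real A := by
      rw [integral_indicator_one hA.compl, probReal_compl_eq_one_sub hA]
    _ ≤ 1 - expNeg (klDiv P Q) := by linarith [expNeg_klDiv_le (Q := Q) hPA]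

lemma integral_compProd_condDistrib_prod_of_indepFun {Ω α β γ : Type*} [MeasurableSpace Ω]
    [MeasurableSpace α] [StandardBorelSpace α] [Nonempty α]
    [MeasurableSpace β] [StandardBorelSpace β] [Nonempty β] [MeasurableSpace γ]
    {μ : Measure Ω} [IsProbabilityMeasure μ] {X : Ω → α} {Y : Ω → β} {V : Ω → γ}
    (hX : Measurable X) (hY : Measurable Y) (hV : Measurable V) (hVY : IndepFun V Y μ)
    {f : γ × (α × β) → ℝ} (hf : Measurable f) {C : ℝ} (hfC : ∀ p, ‖f p‖ ≤ C) :
    ∫ p, f p ∂((μ.map V) ⊗ₘ ((condDistrib X V μ).prod (condDistrib Y V μ)))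
      = ∫ ω, ∫ y, f (V ω, (X ω, y)) ∂(μ.map Y) ∂μ := by
  have hint : ∀ (ν : Measure (γ × (α × β))) [IsFiniteMeasure ν], Integrable f ν := fun ν _ =>
    .of_bound hf.aestronglyMeasurable C (.of_forall hfC)
  have hκY : condDistrib Y V μ =ᵐ[μ.map V] Kernel.const γ (μ.map Y) := by
    refine condDistrib_ae_eq_of_measure_eq_compProd V hY.aemeasurable ?_
    rw [Measure.compProd_const]
    exact (indepFun_iff_map_prod_eq_prod_map_map hV.aemeasurable hY.aemeasurable).1 hVY
  set g : γ × α → ℝ := fun vx => ∫ y, f (vx.1, (vx.2, y)) ∂(μ.map Y)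
  have hg : Measurable g :=
    StronglyMeasurable.measurable <| StronglyMeasurable.integral_prod_right
      (f := fun (vx : γ × α) (y : β) => f (vx.1, (vx.2, y)))
      (hf.comp (measurable_fst.fst.prodMk (measurable_fst.snd.prodMk measurable_snd))
        ).stronglyMeasurable
  have := Measure.isProbabilityMeasure_map (μ := μ) hY.aemeasurable
  have hgC : ∀ vx, ‖g vx‖ ≤ C := fun vx =>
    (norm_integral_le_of_norm_le_const (.of_forall fun _ => hfC _)).trans (by simp)
  calc ∫ p, f p ∂((μ.map V) ⊗ₘ ((condDistrib X V μ).prod (condDistrib Y V μ)))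
      = ∫ p, f p ∂((μ.map V) ⊗ₘ ((condDistrib X V μ).prod (Kernel.const γ (μ.map Y)))) := by
        congr 1
        refine Measure.compProd_congr (hκY.mono fun v hv => ?_)
        rw [Kernel.prod_apply, Kernel.prod_apply, hv]
    _ = ∫ v, ∫ x, g (v, x) ∂(condDistrib X V μ v) ∂(μ.map V) := by
        rw [Measure.integral_compProd (hint _)]
        refine integral_congr_ae (.of_forall fun v => ?_)
        dsimp only
        rw [Kernel.prod_apply, Kernel.const_apply]
        exact integral_prod (fun q => f (v, q))
          (.of_bound (hf.comp measurable_prodMk_left).aestronglyMeasurable C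
            (.of_forall fun _ => hfC _))
    _ = ∫ vx, g vx ∂(μ.map fun ω => (V ω, X ω)) := by
        rw [← compProd_map_condDistrib hX.aemeasurable,
          Measure.integral_compProd (.of_bound hg.aestronglyMeasurable C (.of_forall hgC))]
    _ = ∫ ω, g (V ω, X ω) ∂μ := integral_map (hV.prodMk hX).aemeasurable hg.aestronglyMeasurable

lemma PMF.toMeasure_uniformOfFintype_prod (α β : Type*) [Fintype α] [Fintype β] [Nonempty α]
    [Nonempty β] [MeasurableSpace α] [MeasurableSpace β] [MeasurableSingletonClass α]
    [MeasurableSingletonClass β] :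
    (PMF.uniformOfFintype α).toMeasure.prod (PMF.uniformOfFintype β).toMeasure
      = (PMF.uniformOfFintype (α × β)).toMeasure := by
  refine Measure.ext_iff_singleton.2 fun ⟨a, b⟩ => ?_
  rw [PMF.toMeasure_apply_singleton _ _ (measurableSet_singleton _),
    ← Set.singleton_prod_singleton, Measure.prod_prod]
  simp only [PMF.toMeasure_apply_singleton _ _ (measurableSet_singleton _),
    PMF.uniformOfFintype_apply, Fintype.card_prod, Nat.cast_mul]
  rw [ENNReal.mul_inv (by simp) (by simp)]

lemma AddMonoidHom.map_uniformOfFintype_of_surjective {G H : Type*} [AddGroup G] [AddGroup H]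
    [Fintype G] [Fintype H] [DecidableEq H] [MeasurableSpace G] [MeasurableSingletonClass G]
    [MeasurableSpace H] [MeasurableSingletonClass H] (f : G →+ H)
    (hf : Function.Surjective f) :
    (PMF.uniformOfFintype G).toMeasure.map f = (PMF.uniformOfFintype H).toMeasure := by
  classical
  set N := (Finset.univ.filter fun g => f g = 0).card
  have hfiber (h : H) : (Finset.univ.filter fun g => f g = h).card = N :=
    AddMonoidHom.card_fiber_eq_of_mem_range f (hf h) ⟨0, map_zero f⟩
  have hcard : Fintype.card G = Fintype.card H * N := by
    rw [← Finset.card_univ, Finset.card_eq_sum_card_fiberwise (f := f) (t := Finset.univ)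
      fun _ _ => Finset.mem_univ _]
    simp [hfiber]
  have hN : (N : ℝ≥0∞) ≠ 0 := by
    have := Fintype.card_ne_zero (α := G)
    rw [hcard] at this
    exact_mod_cast right_ne_zero_of_mul this
  refine Measure.ext_iff_singleton.2 fun h => ?_
  rw [Measure.map_apply (measurable_of_countable f) (measurableSet_singleton h),
    PMF.toMeasure_apply_fintype, PMF.toMeasure_apply_singleton _ _ (measurableSet_singleton _)]
  simp only [Set.indicator_apply, Set.mem_preimage, Set.mem_singleton_iff,
    PMF.uniformOfFintype_apply]
  rw [Finset.sum_ite, Finset.sum_const_zero, add_zero, Finset.sum_const, hfiber, nsmul_eq_mul,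
    hcard, Nat.cast_mul, ENNReal.mul_inv (by simp) (by simp), mul_left_comm,
    ENNReal.mul_inv_cancel hN (by simp), mul_one]

lemma integral_uniformOfFintype_select (u : Fin 2 → Fin 2 → ℝ) :
    ∫ y, u y.1 (y.2 y.1) ∂(PMF.uniformOfFintype (Fin 2 × (Fin 2 → Fin 2))).toMeasure
      = 4⁻¹ * ∑ k, ∑ l, u k l := by
  rw [PMF.integral_eq_sum, Fintype.sum_prod_type_right,
    ← Equiv.sum_comp (piFinTwoEquiv fun _ => Fin 2).symm]
  simp [Fintype.sum_prod_type, Fin.sum_univ_two]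
  ring

lemma Measurable.apply_of_countable {α β ι : Type*} [MeasurableSpace α] [MeasurableSpace β]
    [MeasurableSpace ι] [Countable ι] [MeasurableSingletonClass ι] {F : ι → α → β}
    (hF : ∀ i, Measurable (F i)) {g : α → ι} (hg : Measurable g) :
    Measurable fun a => F (g a) a :=
  (measurable_from_prod_countable_left (f := fun p : α × ι => F p.2 p.1) hF).comp
    (measurable_id.prodMk hg)

namespace MetaSetup

variable {Ω 𝒯 𝒵 𝒰 𝒲 Rh Rb : Type*}
    [MeasurableSpace Ω] [MeasurableSpace 𝒯] [MeasurableSpace 𝒵] [MeasurableSpace 𝒰]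
    [MeasurableSpace 𝒲] [MeasurableSpace Rh] [MeasurableSpace Rb]
    {nt n : ℕ} (M : MetaSetup Ω 𝒯 𝒵 𝒰 𝒲 Rh Rb nt n)

lemma lam_mem_Icc (i : Fin nt) (k : Fin 2) (j : Fin n) (l : Fin 2) (ω : Ω) :
    M.lam i k j l ω ∈ Set.Icc 0 1 :=
  M.loss_mem _ _

lemma measurable_selected_sample (i : Fin nt) (k : Fin 2) (j : Fin n) :
    Measurable fun ω => M.Zt ω i k j (M.S ω i k j) := by
  have hZ := M.meas_Zt
  have hS := M.meas_S
  exact Measurable.apply_of_countable (F := fun l ω => M.Zt ω i k j l) (fun l => by fun_prop)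
    (by fun_prop)

lemma measurable_lam (i : Fin nt) (k : Fin 2) (j : Fin n) (l : Fin 2) :
    Measurable (M.lam i k j l) := by
  have hZ := M.meas_Zt
  exact M.meas_loss.comp ((M.measurable_W i k).prodMk (by fun_prop))

def memberships (i : Fin nt) (j : Fin n) (ω : Ω) : Fin 2 × (Fin 2 → Fin 2) :=
  (M.Sh ω i, fun k => M.S ω i k j)

lemma measurable_memberships (i : Fin nt) (j : Fin n) : Measurable (M.memberships i j) := by
  have hSh := M.meas_Sh
  have hS := M.meas_S
  unfold memberships
  fun_prop

lemma indepFun_Zt_memberships (i : Fin nt) (j : Fin n) : IndepFun M.Zt (M.memberships i j) M.μ :=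
  M.indep₁.comp measurable_id ((measurable_of_countable
    fun p : (Fin nt → Fin 2) × (Fin nt → Fin 2 → Fin n → Fin 2) =>
      (p.1 i, fun k => p.2 i k j)).comp measurable_fst)

lemma map_memberships (i : Fin nt) (j : Fin n) :
    M.μ.map (M.memberships i j) = (PMF.uniformOfFintype (Fin 2 × (Fin 2 → Fin 2))).toMeasure := by
  let φ : (Fin nt → Fin 2) × (Fin nt → Fin 2 → Fin n → Fin 2) →+ Fin 2 × (Fin 2 → Fin 2) :=
    AddMonoidHom.mk' (fun p => (p.1 i, fun k => p.2 i k j)) fun _ _ => rfl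
  have hφ : Function.Surjective φ := fun y => ⟨(fun _ => y.1, fun _ k _ => y.2 k), rfl⟩
  have hcomp : M.memberships i j = φ ∘ fun ω => (M.Sh ω, M.S ω) := rfl
  rw [hcomp, ← Measure.map_map (measurable_of_countable φ) (M.meas_Sh.prodMk M.meas_S), M.law_S,
    PMF.toMeasure_uniformOfFintype_prod, φ.map_uniformOfFintype_of_surjective hφ]

lemma integral_train_eq_zero (h : M.Ltrain = 0) (i : Fin nt) (j : Fin n) :
    ∫ ω, M.lam i (M.Sh ω i) j (M.S ω i (M.Sh ω i) j) ω ∂M.μ = 0 := by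
  have hnonneg (i : Fin nt) (j : Fin n) :
      0 ≤ ∫ ω, M.lam i (M.Sh ω i) j (M.S ω i (M.Sh ω i) j) ω ∂M.μ :=
    integral_nonneg fun ω => (M.lam_mem_Icc _ _ _ _ _).1
  rcases mul_eq_zero.1 h with hN | hsum
  · rcases mul_eq_zero.1 (inv_eq_zero.1 hN) with hn | hnt
    · exact (Fin.cast (by exact_mod_cast hn) j).elim0
    · exact (Fin.cast (by exact_mod_cast hnt) i).elim0
  · rw [Finset.sum_eq_zero_iff_of_nonneg fun i _ => Finset.sum_nonneg fun j _ => hnonneg i j]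
      at hsum
    exact (Finset.sum_eq_zero_iff_of_nonneg fun j _ => hnonneg i j).1
      (hsum i (Finset.mem_univ i)) j (Finset.mem_univ j)

lemma integral_mean_lam_le (i : Fin nt) (j : Fin n)
    (htrain : ∫ ω, M.lam i (M.Sh ω i) j (M.S ω i (M.Sh ω i) j) ω ∂M.μ = 0) :
    ∫ ω, 4⁻¹ * ∑ k, ∑ l, M.lam i k j l ω ∂M.μ
      ≤ 1 - expNeg (condMutualInfo M.μ (M.lossArray i j) (M.memberships i j) M.Zt) := by
  set X := M.lossArray i j
  set Y := M.memberships i j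
  have hX := M.measurable_lossArray i j
  have hY := M.measurable_memberships i j
  have hV := M.meas_Zt
  have := Measure.isProbabilityMeasure_map (μ := M.μ) (hV.prodMk (hX.prodMk hY)).aemeasurable
  have := Measure.isProbabilityMeasure_map (μ := M.μ) hV.aemeasurable
  -- `f` must be bounded everywhere, not only on the range of `(Zt, X, Y)`; clamping achieves
  -- this without changing its values there
  let clamp : ℝ → ℝ := fun t => Set.projIcc 0 1 zero_le_one t
  have hclamp (ω : Ω) (k l : Fin 2) : clamp (X ω k l) = X ω k l :=
    congrArg Subtype.val (Set.projIcc_of_mem _ (M.lam_mem_Icc _ _ _ _ _))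
  let f : (Fin nt → Fin 2 → Fin n → Fin 2 → 𝒵) × ((Fin 2 → Fin 2 → ℝ) × (Fin 2 × (Fin 2 → Fin 2)))
      → ℝ := fun p => clamp (p.2.1 p.2.2.1 (p.2.2.2 p.2.2.1))
  have hf : Measurable f :=
    Measurable.apply_of_countable
      (F := fun (y : Fin 2 × (Fin 2 → Fin 2)) (p : (Fin nt → Fin 2 → Fin n → Fin 2 → 𝒵) ×
        ((Fin 2 → Fin 2 → ℝ) × (Fin 2 × (Fin 2 → Fin 2)))) => clamp (p.2.1 y.1 (y.2 y.1)))
      (fun y => by fun_prop) (by fun_prop)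
  have hf0 (p) : 0 ≤ f p := (Set.projIcc 0 1 zero_le_one _).2.1
  have hf1 (p) : f p ≤ 1 := (Set.projIcc 0 1 zero_le_one _).2.2
  have hP : ∫ p, f p ∂(M.μ.map fun ω => (M.Zt ω, (X ω, Y ω))) = 0 := by
    rw [integral_map (hV.prodMk (hX.prodMk hY)).aemeasurable hf.aestronglyMeasurable, ← htrain]
    exact integral_congr_ae (.of_forall fun ω => hclamp ω _ _)
  have hQ := integral_le_one_sub_expNeg_klDiv
    (Q := (M.μ.map M.Zt) ⊗ₘ ((condDistrib X M.Zt M.μ).prod (condDistrib Y M.Zt M.μ))) hf hf0 hf1 hP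
  rw [integral_compProd_condDistrib_prod_of_indepFun hX hY hV (M.indepFun_Zt_memberships i j) hf
    (C := 1) fun p => by rw [Real.norm_of_nonneg (hf0 p)]; exact hf1 p,
    M.map_memberships] at hQ
  have hinner (ω : Ω) : ∫ y, f (M.Zt ω, (X ω, y)) ∂(PMF.uniformOfFintype _).toMeasure
      = 4⁻¹ * ∑ k, ∑ l, M.lam i k j l ω :=
    (integral_uniformOfFintype_select fun k l => clamp (X ω k l)).trans (by simp only [hclamp]; rfl)
  exact (integral_congr_ae (.of_forall fun ω => (hinner ω).symm)).trans_le hQ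

lemma integral_pop_le (i : Fin nt) (j : Fin n)
    (htrain : ∫ ω, M.lam i (M.Sh ω i) j (M.S ω i (M.Sh ω i) j) ω ∂M.μ = 0) :
    ∫ ω, M.lam i (1 - M.Sh ω i) j (1 - M.S ω i (1 - M.Sh ω i) j) ω ∂M.μ
      ≤ 4 - 4 * expNeg (condMutualInfo M.μ (M.lossArray i j) (M.memberships i j) M.Zt) := by
  have hlam (k l : Fin 2) : Integrable (M.lam i k j l) M.μ :=
    .of_bound (M.measurable_lam i k j l).aestronglyMeasurable 1 (.of_forall fun ω => by
      rw [Real.norm_of_nonneg (M.lam_mem_Icc i k j l ω).1]; exact (M.lam_mem_Icc i k j l ω).2)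
  have hle_sum (ω : Ω) (a b : Fin 2) : M.lam i a j b ω ≤ ∑ k, ∑ l, M.lam i k j l ω :=
    (Finset.single_le_sum (f := fun l => M.lam i a j l ω) (fun l _ => (M.lam_mem_Icc _ _ _ _ _).1)
      (Finset.mem_univ b)).trans
      (Finset.single_le_sum (f := fun k => ∑ l, M.lam i k j l ω)
        (fun k _ => Finset.sum_nonneg fun l _ => (M.lam_mem_Icc _ _ _ _ _).1) (Finset.mem_univ a))
  calc ∫ ω, M.lam i (1 - M.Sh ω i) j (1 - M.S ω i (1 - M.Sh ω i) j) ω ∂M.μ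
      ≤ ∫ ω, ∑ k, ∑ l, M.lam i k j l ω ∂M.μ :=
        integral_mono_of_nonneg (.of_forall fun ω => (M.lam_mem_Icc _ _ _ _ _).1)
          (integrable_finsetSum _ fun k _ => integrable_finsetSum _ fun l _ => hlam k l)
          (.of_forall fun ω => hle_sum ω _ _)
    _ = 4 * ∫ ω, 4⁻¹ * ∑ k, ∑ l, M.lam i k j l ω ∂M.μ := by
        rw [integral_const_mul]; ring
    _ ≤ 4 - 4 * expNeg (condMutualInfo M.μ (M.lossArray i j) (M.memberships i j) M.Zt) := by
        linarith [M.integral_mean_lam_le i j htrain]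

end MetaSetup

open MetaSetup in
/-- **Corollary 3 (interpolating one-step binary KL bound).**
If `L̂_train = 0`, then
`L̄_pop ≤ 4 − 4 exp(−avg I(λ^{(i)}_j; Ŝ_i, S^{(i)}_j | Z̃)) ≤ 4 avg I(λ^{(i)}_j; Ŝ_i, S^{(i)}_j | Z̃)`. -/
theorem interpolating_one_step_binary_kl_bound
    {Ω 𝒯 𝒵 𝒰 𝒲 Rh Rb : Type*}
    [MeasurableSpace Ω] [MeasurableSpace 𝒯] [MeasurableSpace 𝒵] [MeasurableSpace 𝒰]
    [MeasurableSpace 𝒲] [MeasurableSpace Rh] [MeasurableSpace Rb]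
    {nt n : ℕ} (M : MetaSetup Ω 𝒯 𝒵 𝒰 𝒲 Rh Rb nt n)
    (hinterp : M.Ltrain = 0) :
    M.Lpop
      ≤ 4 - 4 * expNeg (((n * nt : ℕ) : ℝ≥0∞)⁻¹ * ∑ i : Fin nt, ∑ j : Fin n,
          condMutualInfo M.μ
            (fun ω => fun k l : Fin 2 => M.lam i k j l ω)
            (fun ω => (M.Sh ω i, fun k : Fin 2 => M.S ω i k j))
            (fun ω => M.Zt ω))
    ∧ ENNReal.ofReal
        (4 - 4 * expNeg (((n * nt : ℕ) : ℝ≥0∞)⁻¹ * ∑ i : Fin nt, ∑ j : Fin n,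
          condMutualInfo M.μ
            (fun ω => fun k l : Fin 2 => M.lam i k j l ω)
            (fun ω => (M.Sh ω i, fun k : Fin 2 => M.S ω i k j))
            (fun ω => M.Zt ω)))
      ≤ 4 * (((n * nt : ℕ) : ℝ≥0∞)⁻¹ * ∑ i : Fin nt, ∑ j : Fin n,
          condMutualInfo M.μ
            (fun ω => fun k l : Fin 2 => M.lam i k j l ω)
            (fun ω => (M.Sh ω i, fun k : Fin 2 => M.S ω i k j))
            (fun ω => M.Zt ω)) := by
  refine ⟨?_, by simpa using ofReal_sub_mul_expNeg_le (c := 4) (by norm_num) _⟩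
  rcases Nat.eq_zero_or_pos nt with rfl | hnt
  · simp [Lpop, expNeg]
  rcases Nat.eq_zero_or_pos n with rfl | hn
  · simp [Lpop, expNeg]
  have : Nonempty (Fin nt × Fin n) := ⟨(⟨0, hnt⟩, ⟨0, hn⟩)⟩
  have key := mean_le_sub_mul_expNeg_mean (ι := Fin nt × Fin n) (c := 4) (by norm_num)
    (L := fun p => ∫ ω, M.lam p.1 (1 - M.Sh ω p.1) p.2 (1 - M.S ω p.1 (1 - M.Sh ω p.1) p.2) ω ∂M.μ)
    (I := fun p => condMutualInfo M.μ (fun ω k l => M.lam p.1 k p.2 l ω)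
      (fun ω => (M.Sh ω p.1, fun k => M.S ω p.1 k p.2)) fun ω => M.Zt ω)
    fun p => M.integral_pop_le p.1 p.2 (M.integral_train_eq_zero hinterp p.1 p.2)
  simpa [Lpop, Fintype.sum_prod_type, mul_comm] using key
end
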